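/- Let 0 < α < 1 and γ > 0. For each m ∈ ℕ there exists a constant C > 0 such that for all integers j ≥ 1: |(1−α)^γ F_j − ∑_{k=0}^{m} t_k j^{−k}| ≤ C j^{−m−1}; that is, (1−α)^γ F_j admits the asymptotic expansion ∑_{k≥0} t_k j^{−k} as j → ∞, with coefficients t_k. -/

import Mathlib

/-- Pochhammer symbol `(γ)_l = γ(γ+1)⋯(γ+l−1)`. -/
noncomputable def poch (γ : ℝ) (l : ℕ) : ℝ := ∏ i ∈ Finset.range l, (γ + i)

/-- `F_j(α,γ) = ∑_{l≥0} α^l (γ)_l/l! · jγ/(jγ+l)`, with the `l = 0` summand interpreted as `1`. -/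
noncomputable def Fseq (α γ : ℝ) (j : ℕ) : ℝ :=
  ∑' l : ℕ, if l = 0 then 1 else
    α^l * poch γ l / (Nat.factorial l) * ((j*γ)/(j*γ + l))

/-- Stirling numbers of the second kind. -/
def stirling2 : ℕ → ℕ → ℕ
  | 0, 0 => 1
  | 0, _+1 => 0
  | _+1, 0 => 0
  | n+1, k+1 => (k+1) * stirling2 n (k+1) + stirling2 n k

/-- `t_n(α,γ) = (−1)^n γ^{−n} ∑_{i=0}^n S(n,i) (γ)_i (α/(1−α))^i`. -/
noncomputable def tcoef (α γ : ℝ) (n : ℕ) : ℝ :=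
  (-1)^n * (γ^n)⁻¹ *
    ∑ i ∈ Finset.range (n+1), (stirling2 n i : ℝ) * poch γ i * (α/(1-α))^i

/-- Sum of products `f_{l_s}⋯f_{l_1}` over strictly decreasing integer sequences
`m ≥ l_s > ⋯ > l_1 ≥ 1` with `l_1+⋯+l_s = k` (realized as subsets of `{1,…,m}` with sum `k`). -/
noncomputable def ppSum (f : ℕ → ℝ) (m k : ℕ) : ℝ :=
  ∑ S ∈ (Finset.Icc 1 m).powerset.filter (fun S => S.sum id = k), ∏ l ∈ S, f l

/-!
With `a_l = (γ)_l α^l / l!` and `b = jγ` we have `F_j = ∑ a_l · b/(b + l)`. Expanding `b/(b + l)`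
geometrically in `-l/b` up to order `m` leaves a remainder of size at most `(l/b)^{m+1}`, so
`F_j = ∑_{k ≤ m} (-1)^k M_k / b^k + O(M_{m+1} / b^{m+1})` with the moments `M_k = ∑ a_l l^k`.
Writing `l^k = ∑ S(k,i) l(l-1)⋯(l-i+1)` and summing each falling-factorial moment by the binomial
series `∑ (c)_l x^l / l! = (1 - x)^{-c}` gives `(1-α)^γ M_k = ∑ S(k,i) (γ)_i (α/(1-α))^i`, whence
`(1-α)^γ (-1)^k M_k / b^k = t_k / j^k`.
-/

open Finset Nat

lemma poch_pos {c : ℝ} (hc : 0 < c) (n : ℕ) : 0 < poch c n :=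
  prod_pos fun i _ => by positivity

lemma poch_add (c : ℝ) (i l : ℕ) : poch c (i + l) = poch c i * poch (c + i) l := by
  simp only [poch, prod_range_add, cast_add, add_assoc]

lemma poch_eq_ascPochhammer_eval (c : ℝ) (n : ℕ) : poch c n = (ascPochhammer ℝ n).eval c := by
  induction n with
  | zero => simp [poch]
  | succ n ih => rw [poch, prod_range_succ, ← poch, ih, ascPochhammer_succ_eval]

lemma ring_choose_add_sub_one (c : ℝ) (n : ℕ) : Ring.choose (c + n - 1) n = poch c n / n ! := by
  rw [← Ring.multichoose_eq, eq_div_iff (by positivity), mul_comm, ← nsmul_eq_mul,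
    Ring.factorial_nsmul_multichoose_eq_ascPochhammer, poch_eq_ascPochhammer_eval,
    Polynomial.ascPochhammer_smeval_eq_eval]

lemma hasSum_poch_div_factorial_mul_pow {x : ℝ} (hx : |x| < 1) (c : ℝ) :
    HasSum (fun n => poch c n / n ! * x ^ n) ((1 - x) ^ (-c)) := by
  have := (Real.one_div_one_sub_rpow_hasFPowerSeriesOnBall_zero c).hasSum
    (y := x) (by simpa [enorm_eq_nnnorm, ← NNReal.coe_lt_coe] using hx)
  rw [Real.rpow_neg (by linarith [le_abs_self x])]
  simpa [FormalMultilinearSeries.ofScalars_apply_eq, ring_choose_add_sub_one, mul_comm] using this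

lemma stirling2_eq_stirlingSecond : stirling2 = Nat.stirlingSecond := by
  funext n k
  induction n generalizing k with
  | zero => cases k <;> rfl
  | succ n ih => cases k <;> simp [stirling2, Nat.stirlingSecond_succ_succ, ih]

lemma self_mul_descFactorial (x i : ℕ) :
    x * x.descFactorial i = x.descFactorial (i + 1) + i * x.descFactorial i := by
  rcases le_or_gt i x with h | h
  · rw [descFactorial_succ, ← add_mul, Nat.sub_add_cancel h]
  · simp [descFactorial_eq_zero_iff_lt.2 h]

theorem pow_eq_sum_stirlingSecond_mul_descFactorial (x n : ℕ) :
    x ^ n = ∑ i ∈ range (n + 1), stirlingSecond n i * x.descFactorial i := by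
  induction n with
  | zero => simp
  | succ n ih =>
    have hshift : ∑ i ∈ range (n + 1), (i + 1) * stirlingSecond n (i + 1) * x.descFactorial (i + 1)
        = ∑ i ∈ range (n + 1), i * stirlingSecond n i * x.descFactorial i := by
      rw [sum_range_succ, stirlingSecond_eq_zero_of_lt n.lt_succ_self, sum_range_succ' _ n]
      simp
    calc x ^ (n + 1) = ∑ i ∈ range (n + 1), stirlingSecond n i * (x * x.descFactorial i) := by
          rw [pow_succ, mul_comm, ih, mul_sum]; simp only [mul_left_comm]
      _ = ∑ i ∈ range (n + 1), stirlingSecond n i * x.descFactorial (i + 1)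
          + ∑ i ∈ range (n + 1), (i + 1) * stirlingSecond n (i + 1) * x.descFactorial (i + 1) := by
          rw [hshift, ← sum_add_distrib]
          exact sum_congr rfl fun i _ => by rw [self_mul_descFactorial]; ring
      _ = ∑ i ∈ range (n + 1 + 1), stirlingSecond (n + 1) i * x.descFactorial i := by
          rw [sum_range_succ' _ (n + 1), ← sum_add_distrib]
          simp only [stirlingSecond_succ_succ, stirlingSecond_succ_zero]
          exact sum_congr rfl fun i _ => by ring

/-- Since `(l + i)! = l! · (l + i).descFactorial i` and `(c)_{l+i} = (c)_i (c + i)_l`, this is the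
binomial series with exponent `c + i`, shifted by `i`. -/
theorem hasSum_poch_div_factorial_mul_pow_mul_descFactorial {x : ℝ} (hx : |x| < 1) (c : ℝ)
    (i : ℕ) : HasSum (fun l => poch c l / l ! * x ^ l * l.descFactorial i)
      (poch c i * x ^ i * (1 - x) ^ (-(c + i))) := by
  rw [← hasSum_nat_add_iff' i]
  have hlow : ∑ l ∈ range i, poch c l / l ! * x ^ l * l.descFactorial i = 0 :=
    sum_eq_zero fun l hl => by simp [descFactorial_eq_zero_iff_lt.2 (mem_range.1 hl)]
  have hfac (l : ℕ) : ((l + i) ! : ℝ) = l ! * (l + i).descFactorial i := by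
    have := factorial_mul_descFactorial (le_add_left i l)
    rw [Nat.add_sub_cancel] at this
    exact_mod_cast this.symm
  rw [hlow, sub_zero]
  refine ((hasSum_poch_div_factorial_mul_pow hx (c + i)).mul_left (poch c i * x ^ i)).congr_fun
    fun l => ?_
  have : ((l + i).descFactorial i : ℝ) ≠ 0 := by
    exact_mod_cast (descFactorial_pos.2 (le_add_left i l)).ne'
  rw [add_comm l i, poch_add, pow_add, add_comm i l, hfac]
  field_simp

theorem hasSum_poch_div_factorial_mul_pow_mul_pow {x : ℝ} (hx : |x| < 1) (c : ℝ) (k : ℕ) :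
    HasSum (fun l => poch c l / l ! * x ^ l * (l : ℝ) ^ k)
      ((1 - x) ^ (-c) *
        ∑ i ∈ range (k + 1), stirlingSecond k i * poch c i * (x / (1 - x)) ^ i) := by
  have h1x : 0 < 1 - x := by linarith [le_abs_self x]
  simp_rw [← Nat.cast_pow, pow_eq_sum_stirlingSecond_mul_descFactorial, Nat.cast_sum, mul_sum]
  refine hasSum_sum fun i _ => ?_
  have hval : (1 - x) ^ (-c) * (stirlingSecond k i * poch c i * (x / (1 - x)) ^ i) =
      stirlingSecond k i * (poch c i * x ^ i * (1 - x) ^ (-(c + i))) := by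
    rw [neg_add, Real.rpow_add h1x, Real.rpow_neg h1x.le (i : ℝ), Real.rpow_natCast, div_pow]
    ring
  rw [hval]
  exact ((hasSum_poch_div_factorial_mul_pow_mul_descFactorial hx c i).mul_left _).congr_fun
    fun l => by push_cast; ring

theorem div_add_sub_sum_eq_neg_div_pow_mul {b t : ℝ} (hb : b ≠ 0) (hbt : b + t ≠ 0) (m : ℕ) :
    b / (b + t) - ∑ k ∈ range (m + 1), (-1) ^ k * t ^ k / b ^ k
      = (-(t / b)) ^ (m + 1) * (b / (b + t)) := by
  have hgeom := geom_sum_mul (-(t / b)) (m + 1)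
  have hsum : ∑ k ∈ range (m + 1), (-1) ^ k * t ^ k / b ^ k = ∑ k ∈ range (m + 1), (-(t / b)) ^ k :=
    sum_congr rfl fun k _ => by rw [neg_pow (t / b), div_pow]; ring
  rw [hsum]
  field_simp at hgeom ⊢
  linear_combination hgeom

theorem abs_div_add_sub_sum_le {b t : ℝ} (hb : 0 < b) (ht : 0 ≤ t) (m : ℕ) :
    |b / (b + t) - ∑ k ∈ range (m + 1), (-1) ^ k * t ^ k / b ^ k| ≤ t ^ (m + 1) / b ^ (m + 1) := by
  rw [div_add_sub_sum_eq_neg_div_pow_mul hb.ne' (by positivity), abs_mul, abs_pow, abs_neg,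
    abs_of_nonneg (by positivity : 0 ≤ t / b),
    abs_of_pos (by positivity : 0 < b / (b + t)), ← div_pow]
  exact mul_le_of_le_one_right (by positivity) ((div_le_one (by positivity)).2 (by linarith))

theorem abs_tsum_mul_div_add_sub_sum_le {a M : ℕ → ℝ} (ha : ∀ l, 0 ≤ a l) (m : ℕ)
    (hM : ∀ k ≤ m + 1, HasSum (fun l => a l * (l : ℝ) ^ k) (M k)) {b : ℝ} (hb : 0 < b) :
    |∑' l, a l * (b / (b + l)) - ∑ k ∈ range (m + 1), (-1) ^ k * M k / b ^ k|
      ≤ M (m + 1) / b ^ (m + 1) := by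
  have hsummable : Summable fun l : ℕ => a l * (b / (b + l)) := by
    refine Summable.of_nonneg_of_le (fun l => by have := ha l; positivity) (fun l => ?_)
      (hM 0 (Nat.zero_le _)).summable
    rw [pow_zero, mul_one]
    exact mul_le_of_le_one_right (ha l) ((div_le_one (by positivity)).2 (by simp))
  have hdiff : HasSum
      (fun l : ℕ => a l * (b / (b + l) - ∑ k ∈ range (m + 1), (-1) ^ k * (l : ℝ) ^ k / b ^ k))
      (∑' l, a l * (b / (b + l)) - ∑ k ∈ range (m + 1), (-1) ^ k * M k / b ^ k) := by
    refine (hsummable.hasSum.sub (hasSum_sum fun k hk =>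
      ((hM k (mem_range.1 hk).le).mul_left ((-1) ^ k)).div_const (b ^ k))).congr_fun
      fun l => ?_
    rw [mul_sub, mul_sum]
    congr 1
    exact sum_congr rfl fun k _ => by ring
  have hbound := (hM (m + 1) le_rfl).div_const (b ^ (m + 1))
  have hpt (l : ℕ) : |a l * (b / (b + l) - ∑ k ∈ range (m + 1), (-1) ^ k * (l : ℝ) ^ k / b ^ k)|
      ≤ a l * (l : ℝ) ^ (m + 1) / b ^ (m + 1) := by
    rw [abs_mul, abs_of_nonneg (ha l), mul_div_assoc]
    exact mul_le_mul_of_nonneg_left (abs_div_add_sub_sum_le hb l.cast_nonneg m) (ha l)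
  exact abs_le.2 ⟨hasSum_le (fun l => (abs_le.1 (hpt l)).1) hbound.neg hdiff,
    hasSum_le (fun l => (abs_le.1 (hpt l)).2) hdiff hbound⟩

lemma Fseq_eq_tsum {α γ : ℝ} {j : ℕ} (hj : (j : ℝ) * γ ≠ 0) :
    Fseq α γ j = ∑' l, poch γ l / l ! * α ^ l * (j * γ / (j * γ + l)) :=
  tsum_congr fun l => by
    rcases eq_or_ne l 0 with rfl | hl
    · simp [poch, hj]
    · rw [if_neg hl]; ring

/-- Let `0 < α < 1`, `γ > 0`. For each `m` there is `C > 0` such that for all integers `j ≥ 1`: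
`|(1−α)^γ F_j − ∑_{k=0}^m t_k j^{−k}| ≤ C j^{−m−1}`; i.e. `(1−α)^γ F_j` admits the asymptotic
expansion `∑_{k≥0} t_k j^{−k}` as `j → ∞`. -/
theorem asymptotic_expansion_Fj (α γ : ℝ) (hα0 : 0 < α) (hα1 : α < 1) (hγ : 0 < γ) :
    ∀ m : ℕ, ∃ C : ℝ, 0 < C ∧ ∀ j : ℕ, 1 ≤ j →
      |(1 - α) ^ γ * Fseq α γ j - ∑ k ∈ Finset.range (m+1), tcoef α γ k / (j : ℝ)^k|
        ≤ C / (j : ℝ)^(m+1) := by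
  intro m
  have h1α : 0 < 1 - α := by linarith
  set P : ℕ → ℝ := fun k =>
    ∑ i ∈ range (k + 1), stirlingSecond k i * poch γ i * (α / (1 - α)) ^ i
  have hP : 0 ≤ P (m + 1) := sum_nonneg fun i _ => by
    have := poch_pos hγ i
    positivity
  refine ⟨P (m + 1) / γ ^ (m + 1) + 1, by positivity, fun j hj => ?_⟩
  have hb : 0 < (j : ℝ) * γ := by positivity
  have htcoef (k : ℕ) : tcoef α γ k / (j : ℝ) ^ k
      = (1 - α) ^ γ * ((-1) ^ k * ((1 - α) ^ (-γ) * P k) / ((j : ℝ) * γ) ^ k) := by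
    rw [tcoef, stirling2_eq_stirlingSecond, Real.rpow_neg h1α.le]
    field_simp
    ring
  have hremainder := abs_tsum_mul_div_add_sub_sum_le
    (fun l => by have := poch_pos hγ l; positivity) m
    (fun k _ => hasSum_poch_div_factorial_mul_pow_mul_pow (abs_lt.2 ⟨by linarith, hα1⟩) γ k) hb
  rw [Fseq_eq_tsum hb.ne', sum_congr rfl fun k _ => htcoef k, ← mul_sum, ← mul_sub, abs_mul,
    abs_of_pos (Real.rpow_pos_of_pos h1α γ)]
  calc _ ≤ (1 - α) ^ γ * ((1 - α) ^ (-γ) * P (m + 1) / ((j : ℝ) * γ) ^ (m + 1)) :=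
        mul_le_mul_of_nonneg_left hremainder (by positivity)
    _ = P (m + 1) / γ ^ (m + 1) / (j : ℝ) ^ (m + 1) := by
        rw [Real.rpow_neg h1α.le]
        field_simp
        ring
    _ ≤ _ := by gcongr; linarith
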